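/- There exists a constant c > 100 such that for every fixed real k ≥ e^13, the random graph G ~ G(kn, (c·log k)/n) with high probability (as n → ∞) has the property that every two disjoint vertex sets S and T with |S| = ⌈n/(c³·k·log³k)⌉ and |T| ≤ 2n/(c³·k·log²k) satisfy e(S,T) < 8·|S|·log k. -/

import Mathlib

open Finset SimpleGraph Filter

open scoped Classical

/-- The graph on `Fin n` determined by an indicator function on pairs of vertices. -/
def graphOf (n : ℕ) (f : Sym2 (Fin n) → Bool) : SimpleGraph (Fin n) :=
  SimpleGraph.fromEdgeSet {e | f e = true}

/-- The probability of seeing a particular outcome of the `binom(n,2)` independent coin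
flips, each with success probability `p`. -/
noncomputable def edgeWeight (n : ℕ) (p : ℝ) (f : Sym2 (Fin n) → Bool) : ℝ :=
  ∏ e : Sym2 (Fin n), if f e then p else 1 - p

/-- The probability that the binomial random graph `G(n,p)` lies in the set `A`. -/
noncomputable def graphProb (n : ℕ) (p : ℝ) (A : Set (SimpleGraph (Fin n))) : ℝ :=
  ∑ f : Sym2 (Fin n) → Bool, if graphOf n f ∈ A then edgeWeight n p f else 0

/-- For disjoint `S` and `T`, the number of edges of `G` with one endpoint in `S` and the
other in `T`. -/
noncomputable def edgesBetween {V : Type*} (G : SimpleGraph V) (S T : Finset V) : ℕ :=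
  ((S ×ˢ T).filter fun p => G.Adj p.1 p.2).card

section ProbLemmas

variable {N : ℕ} {p : ℝ}

lemma edgeWeight_nonneg (h0 : 0 ≤ p) (h1 : p ≤ 1) (f : Sym2 (Fin N) → Bool) :
    0 ≤ edgeWeight N p f := by
  unfold edgeWeight
  apply Finset.prod_nonneg
  intro e _
  split <;> linarith

lemma sum_edgeWeight (N : ℕ) (p : ℝ) :
    ∑ f : Sym2 (Fin N) → Bool, edgeWeight N p f = 1 := by
  unfold edgeWeight
  rw [← Fintype.prod_sum (fun (_ : Sym2 (Fin N)) (b : Bool) => if b then p else 1 - p)]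
  simp

lemma graphProb_add_compl (A : Set (SimpleGraph (Fin N))) :
    graphProb N p A + graphProb N p Aᶜ = 1 := by
  unfold graphProb
  rw [← Finset.sum_add_distrib, ← sum_edgeWeight N p]
  apply Finset.sum_congr rfl
  intro f _
  by_cases h : graphOf N f ∈ A <;> simp [h]

lemma graphProb_nonneg (h0 : 0 ≤ p) (h1 : p ≤ 1) (A : Set (SimpleGraph (Fin N))) :
    0 ≤ graphProb N p A := by
  apply Finset.sum_nonneg
  intro f _
  split
  · exact edgeWeight_nonneg h0 h1 f
  · exact le_refl 0

lemma graphProb_mono (h0 : 0 ≤ p) (h1 : p ≤ 1) {A B : Set (SimpleGraph (Fin N))}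
    (hAB : A ⊆ B) : graphProb N p A ≤ graphProb N p B := by
  apply Finset.sum_le_sum
  intro f _
  by_cases h : graphOf N f ∈ A
  · rw [if_pos h, if_pos (hAB h)]
  · rw [if_neg h]
    split
    · exact edgeWeight_nonneg h0 h1 f
    · exact le_refl 0

lemma graphProb_le_sum {ι : Type*} (h0 : 0 ≤ p) (h1 : p ≤ 1)
    (A : Set (SimpleGraph (Fin N))) (I : Finset ι) (B : ι → Set (SimpleGraph (Fin N)))
    (hcov : ∀ f : Sym2 (Fin N) → Bool, graphOf N f ∈ A → ∃ i ∈ I, graphOf N f ∈ B i) :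
    graphProb N p A ≤ ∑ i ∈ I, graphProb N p (B i) := by
  have hswap : ∑ i ∈ I, graphProb N p (B i)
      = ∑ f : Sym2 (Fin N) → Bool, ∑ i ∈ I,
          (if graphOf N f ∈ B i then edgeWeight N p f else 0) := Finset.sum_comm
  rw [hswap]
  apply Finset.sum_le_sum
  intro f _
  have hterm : ∀ i ∈ I, (0:ℝ) ≤ (if graphOf N f ∈ B i then edgeWeight N p f else 0) := by
    intro i _
    split
    · exact edgeWeight_nonneg h0 h1 f
    · exact le_refl 0
  by_cases h : graphOf N f ∈ A
  · obtain ⟨i, hi, hBi⟩ := hcov f h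
    rw [if_pos h]
    calc edgeWeight N p f = (if graphOf N f ∈ B i then edgeWeight N p f else 0) := by
          rw [if_pos hBi]
      _ ≤ _ := Finset.single_le_sum hterm hi
  · rw [if_neg h]
    exact Finset.sum_nonneg hterm

lemma graphProb_edges (h0 : 0 ≤ p) (h1 : p ≤ 1) (E' : Finset (Sym2 (Fin N))) :
    graphProb N p {G | ∀ e ∈ E', e ∈ G.edgeSet} ≤ p ^ E'.card := by
  set g : Sym2 (Fin N) → Bool → ℝ :=
    fun e b => if e ∈ E' then (if b then p else 0) else (if b then p else 1 - p) with hg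
  have step1 : graphProb N p {G | ∀ e ∈ E', e ∈ G.edgeSet}
      ≤ ∑ f : Sym2 (Fin N) → Bool, ∏ e : Sym2 (Fin N), g e (f e) := by
    apply Finset.sum_le_sum
    intro f _
    by_cases h : graphOf N f ∈ {G | ∀ e ∈ E', e ∈ G.edgeSet}
    · rw [if_pos h]
      have hfe : ∀ e ∈ E', f e = true := by
        intro e he
        have h2 := h e he
        simp only [graphOf, SimpleGraph.edgeSet_fromEdgeSet, Set.mem_diff,
          Set.mem_setOf_eq] at h2
        exact h2.1
      apply le_of_eq
      unfold edgeWeight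
      apply Finset.prod_congr rfl
      intro e _
      by_cases he : e ∈ E'
      · rw [hg]; simp only [he, if_true, hfe e he]
      · rw [hg]; simp only [he, if_false]
    · rw [if_neg h]
      apply Finset.prod_nonneg
      intro e _
      simp only [hg]
      split <;> split <;> first | exact h0 | linarith | exact le_refl _
  have step2 : ∑ f : Sym2 (Fin N) → Bool, ∏ e : Sym2 (Fin N), g e (f e)
      = ∏ e : Sym2 (Fin N), (g e true + g e false) := by
    rw [← Fintype.prod_sum g]
    apply Finset.prod_congr rfl
    intro e _
    simp
  have step3 : ∏ e : Sym2 (Fin N), (g e true + g e false) = p ^ E'.card := by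
    have : ∀ e : Sym2 (Fin N), g e true + g e false = if e ∈ E' then p else 1 := by
      intro e
      rw [hg]
      by_cases he : e ∈ E' <;> simp [he]
    simp_rw [this]
    rw [Finset.prod_ite_mem, Finset.univ_inter, Finset.prod_const]
  calc graphProb N p {G | ∀ e ∈ E', e ∈ G.edgeSet} ≤ _ := step1
    _ = _ := step2
    _ = _ := step3


lemma choose_le_pow_real (n j : ℕ) : (n.choose j : ℝ) ≤ (Real.exp 1 * n / j) ^ j := by
  rcases Nat.eq_zero_or_pos j with rfl | hj
  · simp
  · have hfac : (0:ℝ) < (j.factorial : ℝ) := by positivity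
    have h1 : (n.choose j : ℝ) * j.factorial ≤ (n:ℝ) ^ j := by
      have := Nat.descFactorial_le_pow n j
      have h2 : n.choose j * j.factorial = n.descFactorial j := by
        rw [Nat.descFactorial_eq_factorial_mul_choose]; ring
      calc (n.choose j : ℝ) * j.factorial = (n.descFactorial j : ℝ) := by
            exact_mod_cast congrArg (Nat.cast : ℕ → ℝ) h2
        _ ≤ (n:ℝ)^j := by exact_mod_cast this
    have h3 : ((j:ℝ)) ^ j ≤ Real.exp 1 ^ j * j.factorial := by
      have := Real.pow_div_factorial_le_exp (x := (j:ℝ)) (by positivity) j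
      rw [Real.exp_one_pow]
      rw [div_le_iff₀ hfac] at this
      calc ((j:ℝ))^j ≤ Real.exp j * j.factorial := this
        _ = _ := by norm_num
    have hjpos : (0:ℝ) < (j:ℝ) := by exact_mod_cast hj
    rw [div_pow, le_div_iff₀ (by positivity), mul_pow]
    calc (n.choose j : ℝ) * (j:ℝ)^j ≤ (n.choose j : ℝ) * (Real.exp 1 ^ j * j.factorial) := by
          apply mul_le_mul_of_nonneg_left h3 (by positivity)
      _ = ((n.choose j : ℝ) * j.factorial) * Real.exp 1 ^ j := by ring
      _ ≤ (n:ℝ)^j * Real.exp 1 ^ j := by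
          apply mul_le_mul_of_nonneg_right h1 (by positivity)
      _ = Real.exp 1 ^ j * (n:ℝ)^j := by ring

lemma pair_event_bound (h0 : 0 ≤ p) (h1 : p ≤ 1) (S T : Finset (Fin N))
    (hd : Disjoint S T) (m : ℕ) :
    graphProb N p {G | m ≤ edgesBetween G S T} ≤ ((S.card * T.card).choose m : ℝ) * p ^ m := by
  have hcov : ∀ f, graphOf N f ∈ {G | m ≤ edgesBetween G S T} →
      ∃ E ∈ Finset.powersetCard m (S ×ˢ T), graphOf N f ∈ {G | ∀ q ∈ E, G.Adj q.1 q.2} := by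
    intro f hf
    obtain ⟨E, hE, hcard⟩ := Finset.exists_subset_card_eq hf
    refine ⟨E, Finset.mem_powersetCard.mpr ⟨hE.trans (Finset.filter_subset _ _), hcard⟩, ?_⟩
    intro q hq
    exact (Finset.mem_filter.mp (hE hq)).2
  calc graphProb N p _
      ≤ ∑ E ∈ Finset.powersetCard m (S ×ˢ T),
          graphProb N p {G | ∀ q ∈ E, G.Adj q.1 q.2} :=
        graphProb_le_sum h0 h1 _ _ _ hcov
    _ ≤ ∑ _E ∈ Finset.powersetCard m (S ×ˢ T), p ^ m := by
        apply Finset.sum_le_sum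
        intro E hE
        obtain ⟨hEsub, hEcard⟩ := Finset.mem_powersetCard.mp hE
        have hinj : Set.InjOn (fun q : Fin N × Fin N => s(q.1, q.2)) E := by
          intro q hq q' hq' heq
          simp only [Sym2.eq_iff] at heq
          have hq1 := Finset.mem_product.mp (hEsub hq)
          have hq'1 := Finset.mem_product.mp (hEsub hq')
          rcases heq with ⟨h1', h2'⟩ | ⟨h1', h2'⟩
          · exact Prod.ext h1' h2'
          · exact absurd (h1' ▸ hq'1.2) (Finset.disjoint_left.mp hd hq1.1)
        have hcardim : (E.image (fun q : Fin N × Fin N => s(q.1, q.2))).card = m := by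
          rw [Finset.card_image_of_injOn hinj, hEcard]
        calc graphProb N p {G | ∀ q ∈ E, G.Adj q.1 q.2}
            ≤ graphProb N p
                {G | ∀ e ∈ E.image (fun q : Fin N × Fin N => s(q.1, q.2)), e ∈ G.edgeSet} := by
              apply graphProb_mono h0 h1
              intro G hG e he
              obtain ⟨q, hq, rfl⟩ := Finset.mem_image.mp he
              exact (SimpleGraph.mem_edgeSet G).mpr (hG q hq)
          _ ≤ p ^ (E.image (fun q : Fin N × Fin N => s(q.1, q.2))).card :=
              graphProb_edges h0 h1 _
          _ = p ^ m := by rw [hcardim]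
    _ = (((S ×ˢ T).card).choose m : ℝ) * p ^ m := by
        rw [Finset.sum_const, Finset.card_powersetCard, nsmul_eq_mul]
    _ = _ := by rw [Finset.card_product]


lemma bad_bound (h0 : 0 ≤ p) (h1 : p ≤ 1) (s t0 m : ℕ) (hst : s + t0 ≤ N) :
    graphProb N p {G | ∃ S T : Finset (Fin N), Disjoint S T ∧ S.card = s ∧
        T.card ≤ t0 ∧ m ≤ edgesBetween G S T}
      ≤ ((N.choose s : ℝ) * N.choose t0) * (((s * t0).choose m : ℝ) * p ^ m) := by
  set I : Finset (Finset (Fin N) × Finset (Fin N)) :=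
    ((Finset.powersetCard s (univ : Finset (Fin N))) ×ˢ
      (Finset.powersetCard t0 (univ : Finset (Fin N)))).filter
      (fun q => Disjoint q.1 q.2) with hI
  have hcov : ∀ f, graphOf N f ∈ {G | ∃ S T : Finset (Fin N), Disjoint S T ∧ S.card = s ∧
      T.card ≤ t0 ∧ m ≤ edgesBetween G S T} →
      ∃ q ∈ I, graphOf N f ∈ {G | m ≤ edgesBetween G q.1 q.2} := by
    intro f hf
    obtain ⟨S, T, hd, hS, hT, hm⟩ := hf
    have hTsub : T ⊆ univ \ S := Finset.subset_sdiff.mpr ⟨Finset.subset_univ T, hd.symm⟩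
    have hcards : t0 ≤ (univ \ S).card := by
      rw [Finset.card_sdiff_of_subset (Finset.subset_univ S), Finset.card_univ, Fintype.card_fin, hS]
      omega
    obtain ⟨T', hTT', hT'sub, hT'card⟩ := Finset.exists_subsuperset_card_eq hTsub hT hcards
    have hd' : Disjoint S T' := ((Finset.subset_sdiff.mp hT'sub).2).symm
    refine ⟨(S, T'), ?_, ?_⟩
    · rw [hI]
      refine Finset.mem_filter.mpr ⟨Finset.mem_product.mpr ⟨?_, ?_⟩, hd'⟩
      · exact Finset.mem_powersetCard.mpr ⟨Finset.subset_univ S, hS⟩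
      · exact Finset.mem_powersetCard.mpr ⟨Finset.subset_univ T', hT'card⟩
    · have hmono : edgesBetween (graphOf N f) S T ≤ edgesBetween (graphOf N f) S T' := by
        apply Finset.card_le_card
        apply Finset.filter_subset_filter
        exact Finset.product_subset_product (Finset.Subset.refl S) hTT'
      exact le_trans hm hmono
  calc graphProb N p _
      ≤ ∑ q ∈ I, graphProb N p {G | m ≤ edgesBetween G q.1 q.2} :=
        graphProb_le_sum h0 h1 _ _ _ hcov
    _ ≤ ∑ _q ∈ I, (((s * t0).choose m : ℝ) * p ^ m) := by
        apply Finset.sum_le_sum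
        intro q hq
        rw [hI] at hq
        obtain ⟨hqm, hqd⟩ := Finset.mem_filter.mp hq
        obtain ⟨hq1, hq2⟩ := Finset.mem_product.mp hqm
        have h1c : q.1.card = s := (Finset.mem_powersetCard.mp hq1).2
        have h2c : q.2.card = t0 := (Finset.mem_powersetCard.mp hq2).2
        have := pair_event_bound h0 h1 q.1 q.2 hqd m
        rwa [h1c, h2c] at this
    _ = (I.card : ℝ) * (((s * t0).choose m : ℝ) * p ^ m) := by
        rw [Finset.sum_const, nsmul_eq_mul]
    _ ≤ ((N.choose s : ℝ) * N.choose t0) * (((s * t0).choose m : ℝ) * p ^ m) := by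
        apply mul_le_mul_of_nonneg_right _ (by positivity)
        have hcard : I.card ≤ N.choose s * N.choose t0 := by
          calc I.card ≤ ((Finset.powersetCard s (univ : Finset (Fin N))) ×ˢ
              (Finset.powersetCard t0 (univ : Finset (Fin N)))).card :=
                Finset.card_filter_le _ _
            _ = N.choose s * N.choose t0 := by
                rw [Finset.card_product, Finset.card_powersetCard, Finset.card_powersetCard,
                  Finset.card_univ, Fintype.card_fin]
        exact_mod_cast hcard
end ProbLemmas

lemma logR_bound (L u v w : ℝ) (hL : 13 ≤ L) (hu0 : 0 ≤ u) (hu1 : u ≤ 1)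
    (hv : 0 ≤ v) (hw : 0 ≤ w) :
    u + 16 + 2*L + 3*w + 2*L*(u + 16 + 2*L + 2*w) + 8*L*(1 - (v + 10 + L + 2*w)) ≤ -1 := by
  nlinarith [mul_nonneg hw (by linarith : (0:ℝ) ≤ L - 1),
    mul_nonneg (by linarith : (0:ℝ) ≤ 1 - u) (by linarith : (0:ℝ) ≤ L),
    mul_nonneg hv (by linarith : (0:ℝ) ≤ L),
    mul_nonneg (by linarith : (0:ℝ) ≤ L - 13) (by linarith : (0:ℝ) ≤ L)]

lemma one_le_mul2 {x y : ℝ} (hx : 1 ≤ x) (hy : 1 ≤ y) : 1 ≤ x * y := by nlinarith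

lemma one_le_mul3 {x y z : ℝ} (hx : 1 ≤ x) (hy : 1 ≤ y) (hz : 1 ≤ z) : 1 ≤ x * y * z :=
  one_le_mul2 (one_le_mul2 hx hy) hz

set_option maxHeartbeats 2000000 in
lemma per_n_bound (k L c a b : ℝ) (n : ℕ)
    (hcdef : c = Real.exp 5) (hLdef : L = Real.log k)
    (hadef : a = c ^ 3 * k * L ^ 3) (hbdef : b = c ^ 3 * k * L ^ 2)
    (hk0 : 0 < k) (hk1 : 4 ≤ k) (hL : 13 ≤ L) (hna : a ≤ (n:ℝ)) :
    1 - Real.exp (-((n:ℝ)/a)) ≤ graphProb ⌈k * n⌉₊ (c * L / n)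
        {G | ∀ S T : Finset (Fin ⌈k * n⌉₊), Disjoint S T →
          S.card = ⌈(n : ℝ) / a⌉₊ →
          (T.card : ℝ) ≤ 2 * n / b →
          (edgesBetween G S T : ℝ) < 8 * S.card * L}
      ∧ graphProb ⌈k * n⌉₊ (c * L / n)
        {G | ∀ S T : Finset (Fin ⌈k * n⌉₊), Disjoint S T →
          S.card = ⌈(n : ℝ) / a⌉₊ →
          (T.card : ℝ) ≤ 2 * n / b →
          (edgesBetween G S T : ℝ) < 8 * S.card * L} ≤ 1 := by
  have he1 : (2.7182818283:ℝ) < Real.exp 1 := Real.exp_one_gt_d9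
  have he1' : Real.exp 1 < 2.7182818286 := Real.exp_one_lt_d9
  have he0 : (1:ℝ) ≤ Real.exp 1 := by linarith
  have hL0 : (0:ℝ) < L := by linarith
  have hc0 : (0:ℝ) < c := by rw [hcdef]; exact Real.exp_pos 5
  have hc100 : (100:ℝ) < c := by
    have h5 : Real.exp 5 = Real.exp 1 ^ 5 := by rw [← Real.exp_nat_mul]; norm_num
    have h6 : (2.7182818283:ℝ)^5 ≤ Real.exp 1 ^ 5 := by
      apply pow_le_pow_left₀ (by norm_num) he1.le
    rw [hcdef, h5]; nlinarith
  have hc1 : (1:ℝ) ≤ c := by linarith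
  have ha0 : (0:ℝ) < a := by rw [hadef]; positivity
  have hb0 : (0:ℝ) < b := by rw [hbdef]; positivity
  have hc3 : (1:ℝ) ≤ c^3 := one_le_pow₀ hc1
  have hk2' : (1:ℝ) ≤ k^2 := one_le_pow₀ (by linarith)
  have hL2' : (1:ℝ) ≤ L^2 := one_le_pow₀ (by linarith)
  have hL3' : (1:ℝ) ≤ L^3 := one_le_pow₀ (by linarith)
  have hba : b ≤ a := by
    rw [hadef, hbdef]
    have hL2 : L^2 ≤ L^3 := by nlinarith
    have := mul_pos (pow_pos hc0 3) hk0
    exact mul_le_mul_of_nonneg_left hL2 this.le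
  have ha1 : (1:ℝ) ≤ a := by
    rw [hadef]; exact one_le_mul3 hc3 (by linarith) hL3'
  have hb1 : (1:ℝ) ≤ b := by
    rw [hbdef]; exact one_le_mul3 hc3 (by linarith) hL2'
  have hn1 : (1:ℝ) ≤ n := le_trans ha1 hna
  have hn0 : (0:ℝ) < n := by linarith
  set N : ℕ := ⌈k * n⌉₊ with hNdef
  set p : ℝ := c * L / n with hpdef
  have hp0 : 0 ≤ p := by
    rw [hpdef]; exact div_nonneg (mul_nonneg hc0.le hL0.le) hn0.le
  have hcLa : c * L ≤ a := by
    have h1 : (1:ℝ) ≤ c^2 * k * L^2 := one_le_mul3 (one_le_pow₀ hc1) (by linarith) hL2'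
    calc c * L = (c*L) * 1 := by ring
      _ ≤ (c*L) * (c^2*k*L^2) := by
          apply mul_le_mul_of_nonneg_left h1 (by positivity)
      _ = c^3 * k * L^3 := by ring
      _ = a := hadef.symm
  have hp1 : p ≤ 1 := by
    rw [hpdef, div_le_one hn0]; linarith
  set s : ℕ := ⌈(n : ℝ) / a⌉₊ with hsdef
  set t0 : ℕ := ⌊2 * (n:ℝ) / b⌋₊ with htdef
  set m : ℕ := ⌈8 * (s:ℝ) * L⌉₊ with hmdef
  have hs1 : (n:ℝ)/a ≤ s := Nat.le_ceil _
  have hna' : 1 ≤ (n:ℝ)/a := (one_le_div ha0).mpr hna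
  have hs2 : (s:ℝ) ≤ 2*(n:ℝ)/a := by
    have h := Nat.ceil_lt_add_one (show (0:ℝ) ≤ (n:ℝ)/a by positivity)
    rw [← hsdef] at h
    have h2 : 2*(n:ℝ)/a = (n:ℝ)/a + (n:ℝ)/a := by ring
    linarith
  have hs0 : (0:ℝ) < s := lt_of_lt_of_le (by linarith) hs1
  have ht1 : (t0:ℝ) ≤ 2*(n:ℝ)/b := Nat.floor_le (by positivity)
  have ht2 : (n:ℝ)/b ≤ t0 := by
    have h := Nat.sub_one_lt_floor (2*(n:ℝ)/b)
    rw [← htdef] at h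
    have h1 : 1 ≤ (n:ℝ)/b := (one_le_div hb0).mpr (le_trans hba hna)
    have h2 : 2*(n:ℝ)/b = (n:ℝ)/b + (n:ℝ)/b := by ring
    linarith
  have ht0 : (0:ℝ) < t0 := lt_of_lt_of_le (by positivity) ht2
  have hm1 : 8*(s:ℝ)*L ≤ m := Nat.le_ceil _
  have hm0 : (0:ℝ) < m := lt_of_lt_of_le (by positivity) hm1
  have hN1 : k * n ≤ (N:ℝ) := Nat.le_ceil _
  have hkn1 : (1:ℝ) ≤ k * n := by nlinarith
  have hN2 : (N:ℝ) ≤ 2*(k*n) := by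
    have h := Nat.ceil_lt_add_one (show (0:ℝ) ≤ k*(n:ℝ) by positivity)
    rw [← hNdef] at h
    linarith
  have hstN : s + t0 ≤ N := by
    have hreal : (s:ℝ) + t0 ≤ (N:ℝ) := by
      have h1 : (s:ℝ) ≤ 2*(n:ℝ) := le_trans hs2 (div_le_self (by positivity) ha1)
      have h2 : (t0:ℝ) ≤ 2*(n:ℝ) := le_trans ht1 (div_le_self (by positivity) hb1)
      have h3 : 4*(n:ℝ) ≤ k*n := mul_le_mul_of_nonneg_right hk1 hn0.le
      linarith
    exact_mod_cast hreal
  set Agood : Set (SimpleGraph (Fin N)) :=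
    {G | ∀ S T : Finset (Fin N), Disjoint S T →
      S.card = s → (T.card : ℝ) ≤ 2 * (n:ℝ) / b →
      (edgesBetween G S T : ℝ) < 8 * S.card * L} with hAdef
  have hsub : Agoodᶜ ⊆ {G : SimpleGraph (Fin N) | ∃ S T : Finset (Fin N),
      Disjoint S T ∧ S.card = s ∧ T.card ≤ t0 ∧ m ≤ edgesBetween G S T} := by
    intro G hG
    simp only [hAdef, Set.mem_compl_iff, Set.mem_setOf_eq] at hG
    push_neg at hG
    obtain ⟨S, T, hd, hScard, hTcard, hedge⟩ := hG
    refine ⟨S, T, hd, hScard, Nat.le_floor hTcard, ?_⟩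
    rw [hmdef]
    apply Nat.ceil_le.mpr
    rw [hScard] at hedge
    exact hedge
  have hQbad : graphProb N p Agoodᶜ
      ≤ ((N.choose s : ℝ) * N.choose t0) * (((s*t0).choose m : ℝ) * p ^ m) :=
    le_trans (graphProb_mono hp0 hp1 hsub) (bad_bound hp0 hp1 s t0 m hstN)
  set X : ℝ := 2 * Real.exp 1 * c^3 * k^2 * L^3 with hXdef
  set Y : ℝ := 2 * Real.exp 1 * c^3 * k^2 * L^2 with hYdef
  set W : ℝ := Real.exp 1 / (4 * c^2 * k * L^2) with hWdef
  have hX1 : (1:ℝ) ≤ X := by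
    rw [hXdef]
    exact one_le_mul3 (one_le_mul3 (by norm_num) he0 hc3) hk2' hL3'
  have hY1 : (1:ℝ) ≤ Y := by
    rw [hYdef]
    exact one_le_mul3 (one_le_mul3 (by norm_num) he0 hc3) hk2' hL2'
  have hX0 : (0:ℝ) < X := lt_of_lt_of_le one_pos hX1
  have hY0 : (0:ℝ) < Y := lt_of_lt_of_le one_pos hY1
  have hWden : (0:ℝ) < 4 * c^2 * k * L^2 :=
    mul_pos (mul_pos (mul_pos four_pos (pow_pos hc0 2)) hk0) (pow_pos hL0 2)
  have hW0 : (0:ℝ) < W := by rw [hWdef]; exact div_pos (Real.exp_pos 1) hWden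
  have hW1 : W ≤ 1 := by
    rw [hWdef, div_le_one hWden]
    have h1 : (1:ℝ) ≤ c^2*k*L^2 := one_le_mul3 (one_le_pow₀ hc1) (by linarith) hL2'
    calc Real.exp 1 ≤ 4 := by linarith
      _ = 4*1 := by norm_num
      _ ≤ 4*(c^2*k*L^2) := by linarith
      _ = 4*c^2*k*L^2 := by ring
  have hB1 : (N.choose s : ℝ) ≤ X ^ s := by
    refine le_trans (choose_le_pow_real N s) (pow_le_pow_left₀ (by positivity) ?_ s)
    rw [div_le_iff₀ hs0]
    calc Real.exp 1 * N ≤ Real.exp 1 * (2*(k*n)) :=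
          mul_le_mul_of_nonneg_left hN2 (Real.exp_pos 1).le
      _ = X * ((n:ℝ)/a) := by
          rw [hXdef, hadef]
          field_simp
      _ ≤ X * s := mul_le_mul_of_nonneg_left hs1 (by linarith)
  have hB2 : (N.choose t0 : ℝ) ≤ Y ^ t0 := by
    refine le_trans (choose_le_pow_real N t0) (pow_le_pow_left₀ (by positivity) ?_ t0)
    rw [div_le_iff₀ ht0]
    calc Real.exp 1 * N ≤ Real.exp 1 * (2*(k*n)) :=
          mul_le_mul_of_nonneg_left hN2 (Real.exp_pos 1).le
      _ = Y * ((n:ℝ)/b) := by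
          rw [hYdef, hbdef]
          field_simp
      _ ≤ Y * t0 := mul_le_mul_of_nonneg_left ht2 (by linarith)
  have hB3 : ((s*t0).choose m : ℝ) * p ^ m ≤ W ^ m := by
    have h1 : ((s*t0).choose m : ℝ) ≤ (Real.exp 1 * ((s:ℝ)*t0) / m) ^ m := by
      have h := choose_le_pow_real (s*t0) m
      have hcast : ((s*t0 : ℕ):ℝ) = (s:ℝ)*t0 := by push_cast; ring
      rwa [hcast] at h
    have hbase : Real.exp 1 * ((s:ℝ)*t0) / m * p ≤ W := by
      rw [div_mul_eq_mul_div, div_le_iff₀ hm0]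
      calc Real.exp 1 * ((s:ℝ)*t0) * p ≤ Real.exp 1 * ((s:ℝ)*(2*(n:ℝ)/b)) * p := by
            apply mul_le_mul_of_nonneg_right _ hp0
            apply mul_le_mul_of_nonneg_left _ (Real.exp_pos 1).le
            exact mul_le_mul_of_nonneg_left ht1 (by positivity)
        _ = W * (8*(s:ℝ)*L) := by
            rw [hWdef, hbdef, hpdef]
            field_simp
            ring
        _ ≤ W * m := mul_le_mul_of_nonneg_left hm1 hW0.le
    calc ((s*t0).choose m : ℝ) * p ^ m
        ≤ (Real.exp 1 * ((s:ℝ)*t0) / m) ^ m * p ^ m :=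
          mul_le_mul_of_nonneg_right h1 (pow_nonneg hp0 m)
      _ = ((Real.exp 1 * ((s:ℝ)*t0) / m) * p) ^ m := (mul_pow _ _ _).symm
      _ ≤ W ^ m := by
          apply pow_le_pow_left₀ (mul_nonneg (by positivity) hp0) hbase
  have hQX : graphProb N p Agoodᶜ ≤ (X ^ s * Y ^ t0) * W ^ m := by
    refine le_trans hQbad ?_
    apply mul_le_mul (mul_le_mul hB1 hB2 (by positivity) (by positivity)) hB3
      (mul_nonneg (by positivity) (pow_nonneg hp0 m)) (by positivity)
  have hsL2 : (t0:ℝ) ≤ 2*L*(s:ℝ) := by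
    have heq : 2*(n:ℝ)/b = 2*L*((n:ℝ)/a) := by
      rw [hadef, hbdef]
      field_simp
    calc (t0:ℝ) ≤ 2*(n:ℝ)/b := ht1
      _ = 2*L*((n:ℝ)/a) := heq
      _ ≤ 2*L*s := mul_le_mul_of_nonneg_left hs1 (by linarith)
  have hm8 : 8*L*(s:ℝ) ≤ (m:ℝ) := by
    have h : 8*L*(s:ℝ) = 8*(s:ℝ)*L := by ring
    linarith
  set R : ℝ := X * Y ^ (2*L) * W ^ (8*L) with hRdef
  have hYr : (0:ℝ) < Y ^ (2*L) := Real.rpow_pos_of_pos hY0 _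
  have hWr : (0:ℝ) < W ^ (8*L) := Real.rpow_pos_of_pos hW0 _
  have hR0 : 0 < R := by rw [hRdef]; exact mul_pos (mul_pos hX0 hYr) hWr
  have hXYW : (X ^ s * Y ^ t0) * W ^ m ≤ R ^ (s:ℝ) := by
    have e2 : Y ^ (t0:ℕ) ≤ Y ^ (2*L*(s:ℝ)) := by
      rw [← Real.rpow_natCast Y t0]
      exact Real.rpow_le_rpow_of_exponent_le hY1 hsL2
    have e3 : W ^ (m:ℕ) ≤ W ^ (8*L*(s:ℝ)) := by
      rw [← Real.rpow_natCast W m]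
      exact Real.rpow_le_rpow_of_exponent_ge hW0 hW1 hm8
    calc (X ^ s * Y ^ t0) * W ^ m
        ≤ (X ^ ((s:ℕ):ℝ) * Y ^ (2*L*(s:ℝ))) * W ^ (8*L*(s:ℝ)) := by
          rw [Real.rpow_natCast X s]
          exact mul_le_mul (mul_le_mul (le_refl _) e2 (pow_nonneg hY0.le _)
            (pow_nonneg hX0.le _)) e3 (pow_nonneg hW0.le _)
            (mul_nonneg (pow_nonneg hX0.le _) (Real.rpow_nonneg hY0.le _))
      _ = R ^ (s:ℝ) := by
          rw [hRdef, Real.mul_rpow (mul_pos hX0 hYr).le hWr.le,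
            Real.mul_rpow hX0.le hYr.le, ← Real.rpow_mul hY0.le, ← Real.rpow_mul hW0.le]
  have hlogX : Real.log X = Real.log 2 + 16 + 2*L + 3*Real.log L := by
    have hX' : X = 2*(Real.exp 1*(c^3*(k^2*L^3))) := by rw [hXdef]; ring
    have p1 : (0:ℝ) < k^2*L^3 := mul_pos (pow_pos hk0 2) (pow_pos hL0 3)
    have p2 : (0:ℝ) < c^3*(k^2*L^3) := mul_pos (pow_pos hc0 3) p1
    rw [hX', Real.log_mul (by norm_num) (mul_pos (Real.exp_pos 1) p2).ne',
      Real.log_mul (Real.exp_pos 1).ne' p2.ne',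
      Real.log_mul (pow_pos hc0 3).ne' p1.ne',
      Real.log_mul (pow_pos hk0 2).ne' (pow_pos hL0 3).ne',
      Real.log_exp, Real.log_pow, Real.log_pow, Real.log_pow, hcdef, Real.log_exp, ← hLdef]
    push_cast
    ring
  have hlogY : Real.log Y = Real.log 2 + 16 + 2*L + 2*Real.log L := by
    have hY' : Y = 2*(Real.exp 1*(c^3*(k^2*L^2))) := by rw [hYdef]; ring
    have p1 : (0:ℝ) < k^2*L^2 := mul_pos (pow_pos hk0 2) (pow_pos hL0 2)
    have p2 : (0:ℝ) < c^3*(k^2*L^2) := mul_pos (pow_pos hc0 3) p1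
    rw [hY', Real.log_mul (by norm_num) (mul_pos (Real.exp_pos 1) p2).ne',
      Real.log_mul (Real.exp_pos 1).ne' p2.ne',
      Real.log_mul (pow_pos hc0 3).ne' p1.ne',
      Real.log_mul (pow_pos hk0 2).ne' (pow_pos hL0 2).ne',
      Real.log_exp, Real.log_pow, Real.log_pow, Real.log_pow, hcdef, Real.log_exp, ← hLdef]
    push_cast
    ring
  have hlogW : Real.log W = 1 - (Real.log 4 + 10 + L + 2*Real.log L) := by
    have hW' : W = Real.exp 1 / (4*(c^2*(k*L^2))) := by rw [hWdef]; ring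
    have p1 : (0:ℝ) < k*L^2 := mul_pos hk0 (pow_pos hL0 2)
    have p2 : (0:ℝ) < c^2*(k*L^2) := mul_pos (pow_pos hc0 2) p1
    rw [hW', Real.log_div (Real.exp_pos 1).ne' (mul_pos four_pos p2).ne', Real.log_exp,
      Real.log_mul (by norm_num) p2.ne',
      Real.log_mul (pow_pos hc0 2).ne' p1.ne',
      Real.log_mul hk0.ne' (pow_pos hL0 2).ne',
      Real.log_pow, Real.log_pow, hcdef, Real.log_exp, ← hLdef]
    push_cast
    ring
  have hlogR : Real.log R ≤ -1 := by
    rw [hRdef, Real.log_mul (mul_pos hX0 hYr).ne' hWr.ne', Real.log_mul hX0.ne' hYr.ne',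
      Real.log_rpow hY0, Real.log_rpow hW0, hlogX, hlogY, hlogW]
    have hlog2 : Real.log 2 ≤ 1 := by
      have h := Real.log_le_sub_one_of_pos (by norm_num : (0:ℝ) < 2)
      linarith
    have hlog2' : (0:ℝ) ≤ Real.log 2 := Real.log_nonneg one_le_two
    have hlog4' : (0:ℝ) ≤ Real.log 4 := Real.log_nonneg (by norm_num)
    have hlogL' : (0:ℝ) ≤ Real.log L := Real.log_nonneg (by linarith)
    linarith [logR_bound L (Real.log 2) (Real.log 4) (Real.log L) hL hlog2' hlog2 hlog4' hlogL']
  have hRle : R ≤ Real.exp (-1) := by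
    rw [← Real.exp_log hR0]
    exact Real.exp_le_exp.mpr hlogR
  have hQfin : graphProb N p Agoodᶜ ≤ Real.exp (-((n:ℝ)/a)) := by
    have h1 : R ^ ((s:ℕ):ℝ) ≤ Real.exp (-1) ^ ((s:ℕ):ℝ) :=
      Real.rpow_le_rpow hR0.le hRle (by positivity)
    have h2 : Real.exp (-1) ^ ((s:ℕ):ℝ) = Real.exp (-((s:ℕ):ℝ)) := by
      rw [Real.rpow_def_of_pos (Real.exp_pos _), Real.log_exp, neg_one_mul]
    have h3 : Real.exp (-((s:ℕ):ℝ)) ≤ Real.exp (-((n:ℝ)/a)) :=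
      Real.exp_le_exp.mpr (by linarith)
    calc graphProb N p Agoodᶜ ≤ (X ^ s * Y ^ t0) * W ^ m := hQX
      _ ≤ R ^ ((s:ℕ):ℝ) := hXYW
      _ ≤ Real.exp (-1) ^ ((s:ℕ):ℝ) := h1
      _ = Real.exp (-((s:ℕ):ℝ)) := h2
      _ ≤ Real.exp (-((n:ℝ)/a)) := h3
  have hcompl := graphProb_add_compl (N := N) (p := p) Agood
  have hQ0 : 0 ≤ graphProb N p Agoodᶜ := graphProb_nonneg hp0 hp1 _
  constructor
  · linarith
  · linarith


/-- There is a constant `c > 100` such that for every `k ≥ e¹³`, with high probability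
(as `n → ∞`) in `G(⌈kn⌉, c·log k/n)` every two disjoint vertex sets `S`, `T` with
`|S| = ⌈n/(c³·k·log³k)⌉` and `|T| ≤ 2n/(c³·k·log²k)` satisfy `e(S,T) < 8|S|·log k`. -/
theorem few_edges_between_sets_multicolour_case :
    ∃ c : ℝ, 100 < c ∧ ∀ k : ℝ, Real.exp 13 ≤ k →
      Tendsto (fun n : ℕ =>
          graphProb ⌈k * n⌉₊ (c * Real.log k / n)
            {G | ∀ S T : Finset (Fin ⌈k * n⌉₊), Disjoint S T →
              S.card = ⌈(n : ℝ) / (c ^ 3 * k * Real.log k ^ 3)⌉₊ →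
              (T.card : ℝ) ≤ 2 * n / (c ^ 3 * k * Real.log k ^ 2) →
              (edgesBetween G S T : ℝ) < 8 * S.card * Real.log k})
        atTop (nhds 1) := by
  have he1 : (2.7182818283:ℝ) < Real.exp 1 := Real.exp_one_gt_d9
  have hc100 : (100:ℝ) < Real.exp 5 := by
    have h5 : Real.exp 5 = Real.exp 1 ^ 5 := by rw [← Real.exp_nat_mul]; norm_num
    have h6 : (2.7182818283:ℝ)^5 ≤ Real.exp 1 ^ 5 := by
      apply pow_le_pow_left₀ (by norm_num) he1.le
    rw [h5]; nlinarith
  refine ⟨Real.exp 5, hc100, ?_⟩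
  intro k hk
  set c : ℝ := Real.exp 5 with hcdef
  set L : ℝ := Real.log k with hLdef
  have hk0 : (0:ℝ) < k := lt_of_lt_of_le (Real.exp_pos 13) hk
  have hk1 : (4:ℝ) ≤ k := by
    have h13 : Real.exp 13 = Real.exp 1 ^ 13 := by rw [← Real.exp_nat_mul]; norm_num
    have h6 : (2.7182818283:ℝ)^13 ≤ Real.exp 1 ^ 13 := by
      apply pow_le_pow_left₀ (by norm_num) he1.le
    have h7 : (4:ℝ) ≤ (2.7182818283:ℝ)^13 := by norm_num
    linarith [h13 ▸ (h7.trans h6), hk]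
  have hL : 13 ≤ L := by
    rw [hLdef]
    calc (13:ℝ) = Real.log (Real.exp 13) := (Real.log_exp 13).symm
      _ ≤ Real.log k := Real.log_le_log (Real.exp_pos _) hk
  have hc0 : (0:ℝ) < c := Real.exp_pos 5
  have hL0 : (0:ℝ) < L := by linarith
  set a : ℝ := c ^ 3 * k * L ^ 3 with hadef
  set b : ℝ := c ^ 3 * k * L ^ 2 with hbdef
  have ha0 : (0:ℝ) < a := by rw [hadef]; positivity
  have hlow : Tendsto (fun n : ℕ => 1 - Real.exp (-((n:ℝ)/a))) atTop (nhds 1) := by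
    have h1 : Tendsto (fun n : ℕ => (n:ℝ)/a) atTop atTop :=
      (tendsto_natCast_atTop_atTop).atTop_div_const ha0
    have h2 : Tendsto (fun n : ℕ => Real.exp (-((n:ℝ)/a))) atTop (nhds 0) :=
      Real.tendsto_exp_atBot.comp (tendsto_neg_atTop_atBot.comp h1)
    have h3 := tendsto_const_nhds (x := (1:ℝ)) (f := atTop (α := ℕ)) |>.sub h2
    simpa using h3
  have hmain : ∀ᶠ n : ℕ in atTop,
      (1 - Real.exp (-((n:ℝ)/a)) ≤ graphProb ⌈k * n⌉₊ (c * L / n)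
        {G | ∀ S T : Finset (Fin ⌈k * n⌉₊), Disjoint S T →
          S.card = ⌈(n : ℝ) / a⌉₊ → (T.card : ℝ) ≤ 2 * n / b →
          (edgesBetween G S T : ℝ) < 8 * S.card * L}
      ∧ graphProb ⌈k * n⌉₊ (c * L / n)
        {G | ∀ S T : Finset (Fin ⌈k * n⌉₊), Disjoint S T →
          S.card = ⌈(n : ℝ) / a⌉₊ → (T.card : ℝ) ≤ 2 * n / b →
          (edgesBetween G S T : ℝ) < 8 * S.card * L} ≤ 1) := by
    filter_upwards [eventually_ge_atTop ⌈a⌉₊] with n hn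
    exact per_n_bound k L c a b n hcdef hLdef hadef hbdef hk0 hk1 hL
      (le_trans (Nat.le_ceil a) (Nat.cast_le.mpr hn))
  exact tendsto_of_tendsto_of_tendsto_of_le_of_le' hlow tendsto_const_nhds
    (hmain.mono fun n h => h.1) (hmain.mono fun n h => h.2)
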